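/- arXiv:1106.2887 — 7 statements merged into one kernel-verified Lean document; each statement's English description precedes it below -/
import Mathlib

section
/- For every integer k ≥ 1, the k-th bivariate copula L-moment satisfies the copula representation δ_k = ∫₀¹∫₀¹ (C(u,v) − u v) · P_k′(v) dv du, where P_k′ is the derivative of the k-th shifted Legendre polynomial; that is, Cov(U₁, P_k(U₂)) = ∫₀¹∫₀¹ (C(u,v) − u v) P_k′(v) dv du for (U₁,U₂) distributed according to μ. -/
/-!
Since `μ` lives on the unit square, `C(u,v) = ∫ 1{p ≤ (u,v)} dμ(p)`, so by Fubini and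
`∫₀¹ 1{p₁ ≤ u} du = 1 - p₁`, `∫₀¹ 1{p₂ ≤ v} g'(v) dv = g(1) - g(p₂)` we get
`∫∫ C g' = E[(1 - U₁)(g(1) - g(U₂))]` for every `C¹` function `g`.
The product `uv` is the distribution function of the uniform measure on the square, for which
the same identity gives `E[1 - U₁] E[g(1) - g(U₂)]`, since its marginals are those of `μ`.
The difference is the covariance of `1 - U₁` and `g(1) - g(U₂)`, which is that of `U₁` and `g(U₂)`.
-/

open MeasureTheory Set

/-- The `k`-th shifted Legendre polynomial
`P_k(u) = ∑_{ℓ=0}^{k} (−1)^{k+ℓ} (k+ℓ)!/((ℓ!)² (k−ℓ)!) u^ℓ`. -/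
noncomputable def shiftedLegendre (k : ℕ) (u : ℝ) : ℝ :=
  ∑ l ∈ Finset.range (k + 1),
    (-1 : ℝ) ^ (k + l) * (Nat.factorial (k + l) : ℝ) /
      ((Nat.factorial l : ℝ) ^ 2 * (Nat.factorial (k - l) : ℝ)) * u ^ l

open Function

lemma intervalIntegral_intervalIntegral_eq_setIntegral_Icc_prod_Icc {a b c d : ℝ}
    (hab : a ≤ b) (hcd : c ≤ d) {f : ℝ × ℝ → ℝ} (hf : IntegrableOn f (Icc a b ×ˢ Icc c d)) :
    ∫ x in a..b, ∫ y in c..d, f (x, y) = ∫ z in Icc a b ×ˢ Icc c d, f z := by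
  rw [Measure.volume_eq_prod] at hf ⊢
  simp_rw [intervalIntegral.integral_of_le hab, intervalIntegral.integral_of_le hcd,
    ← integral_Icc_eq_integral_Ioc]
  exact (setIntegral_prod f hf).symm

lemma setIntegral_Icc_indicator_Ici {a b c : ℝ} (hab : a ≤ b) (hbc : b ≤ c) (f : ℝ → ℝ) :
    ∫ x in Icc a c, (Ici b).indicator f x = ∫ x in b..c, f x := by
  have hinter : Ici b ∩ Icc a c = Icc b c := by
    ext x
    simp only [mem_inter_iff, mem_Ici, mem_Icc]
    exact ⟨fun h => ⟨h.1, h.2.2⟩, fun h => ⟨h.1, hab.trans h.1, h.2⟩⟩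
  rw [integral_indicator measurableSet_Ici, Measure.restrict_restrict measurableSet_Ici,
    hinter, integral_Icc_eq_integral_Ioc,
    intervalIntegral.integral_of_le hbc]

lemma Continuous.integrable_of_ae_mem_compact {X : Type*} [TopologicalSpace X] [T2Space X]
    [MeasurableSpace X] [OpensMeasurableSpace X] {μ : Measure X} [IsFiniteMeasure μ]
    {K : Set X} (hK : IsCompact K) (hμ : ∀ᵐ x ∂μ, x ∈ K) {f : X → ℝ} (hf : Continuous f) :
    Integrable f μ := by
  rw [← Measure.restrict_eq_self_of_ae_mem hμ]
  exact hf.continuousOn.integrableOn_compact hK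

lemma ae_mem_prod_of_map_eq_restrict {α β : Type*} [MeasurableSpace α] [MeasurableSpace β]
    {μ : Measure (α × β)} {ν₁ : Measure α} {ν₂ : Measure β} {s : Set α} {t : Set β}
    (hs : MeasurableSet s) (ht : MeasurableSet t) (h1 : μ.map Prod.fst = ν₁.restrict s)
    (h2 : μ.map Prod.snd = ν₂.restrict t) : ∀ᵐ p ∂μ, p ∈ s ×ˢ t := by
  have hs' : ∀ᵐ x ∂μ.map Prod.fst, x ∈ s := h1 ▸ ae_restrict_mem hs
  have ht' : ∀ᵐ y ∂μ.map Prod.snd, y ∈ t := h2 ▸ ae_restrict_mem ht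
  filter_upwards [ae_of_ae_map measurable_fst.aemeasurable hs',
    ae_of_ae_map measurable_snd.aemeasurable ht'] with p hp₁ hp₂ using ⟨hp₁, hp₂⟩

lemma integral_const_sub_mul_const_sub_sub {Ω : Type*} [MeasurableSpace Ω] {μ : Measure Ω}
    [IsProbabilityMeasure μ] {X Y : Ω → ℝ} (hX : Integrable X μ) (hY : Integrable Y μ)
    (hXY : Integrable (fun ω => X ω * Y ω) μ) (a b : ℝ) :
    ∫ ω, (a - X ω) * (b - Y ω) ∂μ - (∫ ω, (a - X ω) ∂μ) * ∫ ω, (b - Y ω) ∂μ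
      = ∫ ω, X ω * Y ω ∂μ - (∫ ω, X ω ∂μ) * ∫ ω, Y ω ∂μ := by
  have hexpand : ∀ ω, (a - X ω) * (b - Y ω) = (a * b - b * X ω) - (a * Y ω - X ω * Y ω) :=
    fun ω => by ring
  have hbX : Integrable (fun ω => b * X ω) μ := hX.const_mul b
  have haY : Integrable (fun ω => a * Y ω) μ := hY.const_mul a
  have hleft : Integrable (fun ω => a * b - b * X ω) μ := (integrable_const _).sub hbX
  have hright : Integrable (fun ω => a * Y ω - X ω * Y ω) μ := haY.sub hXY
  simp_rw [hexpand]
  rw [integral_sub hleft hright, integral_sub (integrable_const _) hbX, integral_sub haY hXY,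
    integral_sub (integrable_const _) hX, integral_sub (integrable_const _) hY]
  simp only [integral_const_mul, integral_const, probReal_univ, one_smul]
  ring

section

variable {g : ℝ → ℝ}

lemma setIntegral_unitSquare_indicator_Icc_mul_deriv (hg : ContDiff ℝ 1 g) {p : ℝ × ℝ}
    (hp : p ∈ Icc (0 : ℝ) 1 ×ˢ Icc (0 : ℝ) 1) :
    ∫ z in Icc (0 : ℝ) 1 ×ˢ Icc (0 : ℝ) 1, (Icc 0 z).indicator 1 p * deriv g z.2
      = (1 - p.1) * (g 1 - g p.2) := by
  obtain ⟨⟨hp₁, hp₁'⟩, hp₂, hp₂'⟩ := hp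
  have hfactor : ∀ z : ℝ × ℝ, (Icc 0 z).indicator 1 p * deriv g z.2
      = (Ici p.1).indicator 1 z.1 * (Ici p.2).indicator (deriv g) z.2 := by
    intro z
    by_cases h₁ : p.1 ≤ z.1 <;> by_cases h₂ : p.2 ≤ z.2 <;>
      simp [Prod.le_def, h₁, h₂, hp₁, hp₂]
  simp_rw [hfactor]
  rw [Measure.volume_eq_prod, setIntegral_prod_mul, setIntegral_Icc_indicator_Ici hp₁ hp₁',
    setIntegral_Icc_indicator_Ici hp₂ hp₂',
    intervalIntegral.integral_deriv_eq_sub (fun x _ => (hg.differentiable one_ne_zero) x)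
      ((hg.continuous_deriv le_rfl).intervalIntegrable _ _)]
  simp

variable {μ : Measure (ℝ × ℝ)} [IsFiniteMeasure μ]

lemma integrable_indicator_Icc_mul_deriv (hg : Continuous (deriv g)) :
    Integrable (uncurry fun (z p : ℝ × ℝ) => (Icc 0 z).indicator 1 p * deriv g z.2)
      ((volume.restrict (Icc (0 : ℝ) 1 ×ˢ Icc (0 : ℝ) 1)).prod μ) := by
  have hdom : Integrable (fun w : (ℝ × ℝ) × (ℝ × ℝ) => |deriv g w.1.2| * 1)
      ((volume.restrict (Icc (0 : ℝ) 1 ×ˢ Icc (0 : ℝ) 1)).prod μ) :=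
    Integrable.mul_prod (((hg.comp continuous_snd).abs.continuousOn.integrableOn_compact
      (isCompact_Icc.prod isCompact_Icc))) (integrable_const 1)
  refine hdom.mono' ?_ (ae_of_all _ fun w => ?_)
  · have hbox : MeasurableSet {w : (ℝ × ℝ) × (ℝ × ℝ) | w.2 ∈ Icc 0 w.1} :=
      (measurableSet_le measurable_const measurable_snd).inter
        (measurableSet_le measurable_snd measurable_fst)
    exact ((measurable_const.indicator hbox).mul
      ((hg.measurable).comp (measurable_snd.comp measurable_fst))).aestronglyMeasurable
  · simp only [uncurry, indicator_apply, norm_mul, mul_one, Real.norm_eq_abs]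
    split_ifs <;> simp

lemma integrableOn_measureReal_Icc_mul_deriv (hg : Continuous (deriv g)) :
    IntegrableOn (fun z => μ.real (Icc 0 z) * deriv g z.2) (Icc (0 : ℝ) 1 ×ˢ Icc (0 : ℝ) 1) := by
  refine ((integrable_indicator_Icc_mul_deriv (μ := μ) hg).integral_prod_left).congr
    (ae_of_all _ fun z => ?_)
  simp only [uncurry, integral_mul_const, integral_indicator_one measurableSet_Icc]

theorem setIntegral_measureReal_Icc_mul_deriv (hμ : ∀ᵐ p ∂μ, p ∈ Icc (0 : ℝ) 1 ×ˢ Icc (0 : ℝ) 1)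
    (hg : ContDiff ℝ 1 g) :
    ∫ z in Icc (0 : ℝ) 1 ×ˢ Icc (0 : ℝ) 1, μ.real (Icc 0 z) * deriv g z.2
      = ∫ p, (1 - p.1) * (g 1 - g p.2) ∂μ := by
  simp_rw [← integral_indicator_one (μ := μ) measurableSet_Icc, ← integral_mul_const]
  rw [integral_integral_swap (integrable_indicator_Icc_mul_deriv (hg.continuous_deriv le_rfl))]
  exact integral_congr_ae (hμ.mono fun p hp =>
    setIntegral_unitSquare_indicator_Icc_mul_deriv hg hp)

lemma measureReal_restrict_unitSquare_Icc {z : ℝ × ℝ} (hz : z ∈ Icc (0 : ℝ) 1 ×ˢ Icc (0 : ℝ) 1) :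
    (volume.restrict (Icc (0 : ℝ) 1 ×ˢ Icc (0 : ℝ) 1)).real (Icc 0 z) = z.1 * z.2 := by
  have hbox : Icc (0 : ℝ × ℝ) z = Icc 0 z.1 ×ˢ Icc 0 z.2 := (Icc_prod_Icc 0 z.1 0 z.2).symm
  rw [hbox, measureReal_def, Measure.restrict_apply (measurableSet_Icc.prod measurableSet_Icc),
    prod_inter_prod, inter_eq_left.2 (Icc_subset_Icc_right hz.1.2),
    inter_eq_left.2 (Icc_subset_Icc_right hz.2.2), Measure.volume_eq_prod, Measure.prod_prod,
    Real.volume_Icc, Real.volume_Icc, ENNReal.toReal_mul, sub_zero, sub_zero,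
    ENNReal.toReal_ofReal hz.1.1, ENNReal.toReal_ofReal hz.2.1]

lemma setIntegral_unitSquare_mul_mul_deriv (hg : ContDiff ℝ 1 g) :
    ∫ z in Icc (0 : ℝ) 1 ×ˢ Icc (0 : ℝ) 1, z.1 * z.2 * deriv g z.2
      = (∫ x in Icc (0 : ℝ) 1, (1 - x)) * ∫ y in Icc (0 : ℝ) 1, (g 1 - g y) := by
  have hS : MeasurableSet (Icc (0 : ℝ) 1 ×ˢ Icc (0 : ℝ) 1) :=
    measurableSet_Icc.prod measurableSet_Icc
  have : IsFiniteMeasure (volume.restrict (Icc (0 : ℝ) 1 ×ˢ Icc (0 : ℝ) 1)) :=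
    isFiniteMeasure_restrict.2 (isCompact_Icc.prod isCompact_Icc).measure_ne_top
  calc ∫ z in Icc (0 : ℝ) 1 ×ˢ Icc (0 : ℝ) 1, z.1 * z.2 * deriv g z.2
      = ∫ z in Icc (0 : ℝ) 1 ×ˢ Icc (0 : ℝ) 1,
          (volume.restrict (Icc (0 : ℝ) 1 ×ˢ Icc (0 : ℝ) 1)).real (Icc 0 z) * deriv g z.2 :=
        setIntegral_congr_fun hS fun z hz => by rw [measureReal_restrict_unitSquare_Icc hz]
    _ = ∫ p in Icc (0 : ℝ) 1 ×ˢ Icc (0 : ℝ) 1, (1 - p.1) * (g 1 - g p.2) :=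
        setIntegral_measureReal_Icc_mul_deriv (ae_restrict_mem hS) hg
    _ = _ := by
        rw [Measure.volume_eq_prod, setIntegral_prod_mul (fun x => 1 - x) (fun y => g 1 - g y)]

end

theorem integral_fst_mul_comp_snd_sub_eq_integral_copula_sub_mul_deriv
    {μ : Measure (ℝ × ℝ)} [IsProbabilityMeasure μ]
    (h1 : μ.map Prod.fst = volume.restrict (Icc (0:ℝ) 1))
    (h2 : μ.map Prod.snd = volume.restrict (Icc (0:ℝ) 1)) {g : ℝ → ℝ} (hg : ContDiff ℝ 1 g) :
    (∫ p, p.1 * g p.2 ∂μ) - (∫ p, p.1 ∂μ) * (∫ p, g p.2 ∂μ)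
      = ∫ u in (0:ℝ)..1, ∫ v in (0:ℝ)..1,
          (μ.real (Icc 0 u ×ˢ Icc 0 v) - u * v) * deriv g v := by
  have hS : IsCompact (Icc (0 : ℝ) 1 ×ˢ Icc (0 : ℝ) 1) := isCompact_Icc.prod isCompact_Icc
  have hμS : ∀ᵐ p ∂μ, p ∈ Icc (0 : ℝ) 1 ×ˢ Icc (0 : ℝ) 1 :=
    ae_mem_prod_of_map_eq_restrict measurableSet_Icc measurableSet_Icc h1 h2
  have hgc : Continuous g := hg.continuous
  have hgS : Continuous fun p : ℝ × ℝ => g p.2 := by fun_prop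
  have hmarg₁ : ∫ x in Icc (0 : ℝ) 1, (1 - x) = ∫ p, (1 - p.1) ∂μ := by
    rw [← h1, integral_map measurable_fst.aemeasurable (by fun_prop)]
  have hmarg₂ : ∫ y in Icc (0 : ℝ) 1, (g 1 - g y) = ∫ p, (g 1 - g p.2) ∂μ := by
    rw [← h2, integral_map measurable_snd.aemeasurable (by fun_prop)]
  have hg' := hg.continuous_deriv le_rfl
  have hintμ := integrableOn_measureReal_Icc_mul_deriv (μ := μ) hg'
  have hintUV : IntegrableOn (fun z : ℝ × ℝ => z.1 * z.2 * deriv g z.2)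
      (Icc (0 : ℝ) 1 ×ˢ Icc (0 : ℝ) 1) :=
    (by fun_prop : Continuous fun z : ℝ × ℝ => z.1 * z.2 * deriv g z.2).continuousOn
      |>.integrableOn_compact hS
  calc (∫ p, p.1 * g p.2 ∂μ) - (∫ p, p.1 ∂μ) * (∫ p, g p.2 ∂μ)
      = ∫ p, (1 - p.1) * (g 1 - g p.2) ∂μ
          - (∫ x in Icc (0 : ℝ) 1, (1 - x)) * ∫ y in Icc (0 : ℝ) 1, (g 1 - g y) := by
        rw [hmarg₁, hmarg₂]
        exact (integral_const_sub_mul_const_sub_sub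
          (continuous_fst.integrable_of_ae_mem_compact hS hμS)
          (hgS.integrable_of_ae_mem_compact hS hμS)
          ((continuous_fst.mul hgS).integrable_of_ae_mem_compact hS hμS) 1 (g 1)).symm
    _ = (∫ z in Icc (0 : ℝ) 1 ×ˢ Icc (0 : ℝ) 1, μ.real (Icc 0 z) * deriv g z.2)
          - ∫ z in Icc (0 : ℝ) 1 ×ˢ Icc (0 : ℝ) 1, z.1 * z.2 * deriv g z.2 := by
        rw [setIntegral_measureReal_Icc_mul_deriv hμS hg, setIntegral_unitSquare_mul_mul_deriv hg]
    _ = ∫ z in Icc (0 : ℝ) 1 ×ˢ Icc (0 : ℝ) 1,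
          (μ.real (Icc 0 z) * deriv g z.2 - z.1 * z.2 * deriv g z.2) :=
        (integral_sub hintμ hintUV).symm
    _ = _ := by
        have hint : IntegrableOn
            (fun z : ℝ × ℝ => μ.real (Icc 0 z) * deriv g z.2 - z.1 * z.2 * deriv g z.2)
            (Icc (0 : ℝ) 1 ×ˢ Icc (0 : ℝ) 1) := hintμ.sub hintUV
        rw [← intervalIntegral_intervalIntegral_eq_setIntegral_Icc_prod_Icc zero_le_one zero_le_one
          hint]
        simp only [sub_mul, Icc_prod_Icc, Prod.mk_zero_zero]

lemma contDiff_shiftedLegendre (k : ℕ) : ContDiff ℝ 1 (shiftedLegendre k) := by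
  unfold shiftedLegendre
  fun_prop

theorem copula_Lmoment_representation_general
    (μ : Measure (ℝ × ℝ)) [IsProbabilityMeasure μ]
    (h1 : μ.map Prod.fst = volume.restrict (Icc (0:ℝ) 1))
    (h2 : μ.map Prod.snd = volume.restrict (Icc (0:ℝ) 1))
    (C : ℝ → ℝ → ℝ)
    (hC : ∀ u v : ℝ, C u v = (μ (Icc 0 u ×ˢ Icc 0 v)).toReal)
    (k : ℕ) :
    (∫ p, p.1 * shiftedLegendre k p.2 ∂μ)
        - (∫ p, p.1 ∂μ) * (∫ p, shiftedLegendre k p.2 ∂μ)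
      = ∫ u in (0:ℝ)..1, ∫ v in (0:ℝ)..1,
          (C u v - u * v) * deriv (shiftedLegendre k) v := by
  simp_rw [hC]
  exact integral_fst_mul_comp_snd_sub_eq_integral_copula_sub_mul_deriv h1 h2
    (contDiff_shiftedLegendre k)

/-- **Copula representation of the bivariate L-moments.**
If `μ` is a probability measure on `[0,1]²` with uniform marginals, `C` its joint
distribution function (a copula), and `(U₁,U₂) ~ μ`, then for every `k ≥ 1`,
`Cov(U₁, P_k(U₂)) = ∫₀¹∫₀¹ (C(u,v) − u v) P_k′(v) dv du`. -/
theorem copula_Lmoment_representation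
    (μ : Measure (ℝ × ℝ)) [IsProbabilityMeasure μ]
    (h1 : μ.map Prod.fst = volume.restrict (Icc (0:ℝ) 1))
    (h2 : μ.map Prod.snd = volume.restrict (Icc (0:ℝ) 1))
    (C : ℝ → ℝ → ℝ)
    (hC : ∀ u v : ℝ, C u v = (μ (Icc 0 u ×ˢ Icc 0 v)).toReal)
    (k : ℕ) (hk : 1 ≤ k) :
    (∫ p, p.1 * shiftedLegendre k p.2 ∂μ)
        - (∫ p, p.1 ∂μ) * (∫ p, shiftedLegendre k p.2 ∂μ)
      = ∫ u in (0:ℝ)..1, ∫ v in (0:ℝ)..1,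
          (C u v - u * v) * deriv (shiftedLegendre k) v :=
  copula_Lmoment_representation_general μ h1 h2 C hC k
end

section
/- For the one-iterated FGM copula C_{α₁,α₂}(u,v) = uv(1 + α₁(1−u)(1−v) + α₂ uv(1−u)(1−v)), the first two bivariate copula L-moments are δ₁ = 2∫₀¹∫₀¹ (C_{α₁,α₂}(u,v) − uv) du dv = α₁/18 + α₂/72 and δ₂ = ∫₀¹∫₀¹ (C_{α₁,α₂}(u,v) − uv)(12v − 6) dv du = α₂/120. -/
/-!
The excess `C(u,v) − uv` of the one-iterated FGM copula factors as
`α₁ · u(1−u) · v(1−v) + α₂ · u²(1−u) · v²(1−v)`, a sum of two products of a function of `u`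
and a function of `v`. Each double integral therefore splits into products of the one-variable
moments `∫₀¹ xⁿ(1−x) dx = 1/((n+1)(n+2))`, weighted by `12x − 6` in the second case.
-/

open MeasureTheory

/-- The one-iterated FGM copula
`C_{α₁,α₂}(u,v) = uv(1 + α₁(1−u)(1−v) + α₂ uv(1−u)(1−v))`. -/
noncomputable def iteratedFGM (α₁ α₂ u v : ℝ) : ℝ :=
  u * v * (1 + α₁ * (1 - u) * (1 - v) + α₂ * u * v * (1 - u) * (1 - v))

theorem iteratedFGM_sub_mul (α₁ α₂ u v : ℝ) :
    iteratedFGM α₁ α₂ u v - u * v =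
      α₁ * (u * (1 - u)) * (v * (1 - v)) + α₂ * (u ^ 2 * (1 - u)) * (v ^ 2 * (1 - v)) := by
  unfold iteratedFGM
  ring

theorem integral_integral_mul_add_mul {a b c d : ℝ} {f₁ g₁ f₂ g₂ : ℝ → ℝ}
    (hf₁ : IntervalIntegrable f₁ volume a b) (hf₂ : IntervalIntegrable f₂ volume a b)
    (hg₁ : IntervalIntegrable g₁ volume c d) (hg₂ : IntervalIntegrable g₂ volume c d) :
    ∫ u in a..b, ∫ v in c..d, (f₁ u * g₁ v + f₂ u * g₂ v) =
      (∫ u in a..b, f₁ u) * (∫ v in c..d, g₁ v) + (∫ u in a..b, f₂ u) * ∫ v in c..d, g₂ v := by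
  have inner (u : ℝ) : ∫ v in c..d, (f₁ u * g₁ v + f₂ u * g₂ v) =
      f₁ u * (∫ v in c..d, g₁ v) + f₂ u * ∫ v in c..d, g₂ v := by
    rw [intervalIntegral.integral_add (hg₁.const_mul _) (hg₂.const_mul _),
      intervalIntegral.integral_const_mul, intervalIntegral.integral_const_mul]
  simp_rw [inner]
  rw [intervalIntegral.integral_add (hf₁.mul_const _) (hf₂.mul_const _),
    intervalIntegral.integral_mul_const, intervalIntegral.integral_mul_const]

theorem integral_pow_mul_one_sub (n : ℕ) :
    ∫ x in (0:ℝ)..1, x ^ n * (1 - x) = 1 / ((n + 1) * (n + 2)) := by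
  have split (x : ℝ) : x ^ n * (1 - x) = x ^ n - x ^ (n + 1) := by ring
  simp_rw [split]
  rw [intervalIntegral.integral_sub (intervalIntegral.intervalIntegrable_pow _)
    (intervalIntegral.intervalIntegrable_pow _), integral_pow, integral_pow]
  push_cast
  field_simp
  ring

theorem integral_pow_mul_one_sub_mul_two_mul_sub_one (n : ℕ) :
    ∫ x in (0:ℝ)..1, x ^ n * (1 - x) * (2 * x - 1) = (n - 1) / ((n + 1) * (n + 2) * (n + 3)) := by
  have split (x : ℝ) :
      x ^ n * (1 - x) * (2 * x - 1) = 2 * (x ^ (n + 1) * (1 - x)) - x ^ n * (1 - x) := by ring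
  simp_rw [split]
  rw [intervalIntegral.integral_sub (Continuous.intervalIntegrable (by fun_prop) _ _)
      (Continuous.intervalIntegrable (by fun_prop) _ _), intervalIntegral.integral_const_mul,
    integral_pow_mul_one_sub, integral_pow_mul_one_sub]
  push_cast
  field_simp
  ring

/-- For the one-iterated FGM copula, the first two bivariate copula L-moments are
`δ₁ = 2∫₀¹∫₀¹ (C − uv) du dv = α₁/18 + α₂/72` and
`δ₂ = ∫₀¹∫₀¹ (C − uv)(12v − 6) dv du = α₂/120`. -/
theorem iteratedFGM_first_two_copula_Lmoments (α₁ α₂ : ℝ) :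
    (2 * (∫ u in (0:ℝ)..1, ∫ v in (0:ℝ)..1, (iteratedFGM α₁ α₂ u v - u * v))
        = α₁ / 18 + α₂ / 72) ∧
    ((∫ u in (0:ℝ)..1, ∫ v in (0:ℝ)..1,
          (iteratedFGM α₁ α₂ u v - u * v) * (12 * v - 6))
        = α₂ / 120) := by
  have weighted (u v : ℝ) : (iteratedFGM α₁ α₂ u v - u * v) * (12 * v - 6) =
      6 * α₁ * (u * (1 - u)) * (v ^ 1 * (1 - v) * (2 * v - 1)) +
        6 * α₂ * (u ^ 2 * (1 - u)) * (v ^ 2 * (1 - v) * (2 * v - 1)) := by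
    rw [iteratedFGM_sub_mul]
    ring
  simp_rw [weighted, iteratedFGM_sub_mul]
  have moment₁ : ∫ x in (0:ℝ)..1, x * (1 - x) = 1 / 6 := by
    have h := integral_pow_mul_one_sub 1
    simp only [pow_one] at h
    rw [h]
    norm_num
  rw [integral_integral_mul_add_mul, integral_integral_mul_add_mul]
  · simp only [intervalIntegral.integral_const_mul, moment₁, integral_pow_mul_one_sub,
      integral_pow_mul_one_sub_mul_two_mul_sub_one]
    norm_num
    constructor <;> ring
  all_goals exact Continuous.intervalIntegrable (by fun_prop) _ _
end

section
/- For the two-iterated FGM copula C_{α₁,α₂,α₃}(u,v) = uv(1 + α₁(1−u)(1−v) + α₂ uv(1−u)(1−v) + α₃ uv(1−u)²(1−v)²), the first three bivariate copula L-moments are: δ₁ = 2∫₀¹∫₀¹ (C_{α₁,α₂,α₃}(u,v) − uv) du dv = α₁/18 + α₂/72 + α₃/450; δ₂ = ∫₀¹∫₀¹ (C_{α₁,α₂,α₃}(u,v) − uv)(12v − 6) dv du = α₂/120; δ₃ = ∫₀¹∫₀¹ (C_{α₁,α₂,α₃}(u,v) − uv)(60v² − 60v + 12) dv du = −α₃/1050.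 -/
/-!
Each `αᵢ`-term of `C(u,v) − uv` is a product `φᵢ(u) φᵢ(v)`, with `φ₁ = t(1−t)`, `φ₂ = t²(1−t)`
and `φ₃ = t²(1−t)²`. So every copula L-moment splits as `δₖ = ∑ αᵢ (∫ φᵢ) (∫ φᵢ P_k′)`, and only
nine one-variable polynomial integrals remain. Since `φᵢ` vanishes at `0` and `1`,
`∫ φᵢ P_k′ = −∫ φᵢ′ P_k`, which is zero when `deg φᵢ′ < k` (Legendre orthogonality) or when
`φᵢ` is symmetric under `t ↦ 1 − t` and `k` is even.
-/

open MeasureTheory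

/-- The two-iterated FGM copula
`C(u,v) = uv(1 + α₁(1−u)(1−v) + α₂ uv(1−u)(1−v) + α₃ uv(1−u)²(1−v)²)`. -/
noncomputable def twoIteratedFGM (α₁ α₂ α₃ u v : ℝ) : ℝ :=
  u * v * (1 + α₁ * (1 - u) * (1 - v) + α₂ * u * v * (1 - u) * (1 - v)
    + α₃ * u * v * (1 - u) ^ 2 * (1 - v) ^ 2)

theorem intervalIntegral.integral_integral_sum_mul {ι : Type*} (s : Finset ι) (c : ι → ℝ)
    {f g : ι → ℝ → ℝ} {a b a' b' : ℝ} {μ ν : Measure ℝ}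
    (hf : ∀ i ∈ s, IntervalIntegrable (f i) μ a b)
    (hg : ∀ i ∈ s, IntervalIntegrable (g i) ν a' b') :
    ∫ u in a..b, ∫ v in a'..b', ∑ i ∈ s, c i * f i u * g i v ∂ν ∂μ =
      ∑ i ∈ s, c i * (∫ u in a..b, f i u ∂μ) * ∫ v in a'..b', g i v ∂ν := by
  have inner (u : ℝ) : ∫ v in a'..b', ∑ i ∈ s, c i * f i u * g i v ∂ν =
      ∑ i ∈ s, (c i * ∫ v in a'..b', g i v ∂ν) * f i u := by
    rw [intervalIntegral.integral_finsetSum fun i hi => (hg i hi).const_mul _]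
    refine Finset.sum_congr rfl fun i _ => ?_
    rw [intervalIntegral.integral_const_mul]
    ring
  simp_rw [inner]
  rw [intervalIntegral.integral_finsetSum fun i hi => (hf i hi).const_mul _]
  refine Finset.sum_congr rfl fun i _ => ?_
  rw [intervalIntegral.integral_const_mul]
  ring

def fgmGenerator : Fin 3 → ℝ → ℝ :=
  ![fun t => t * (1 - t), fun t => t ^ 2 * (1 - t), fun t => t ^ 2 * (1 - t) ^ 2]

theorem continuous_fgmGenerator (i : Fin 3) : Continuous (fgmGenerator i) := by
  fin_cases i <;>
    simp only [fgmGenerator, Fin.zero_eta, Fin.mk_one, Fin.reduceFinMk, Matrix.cons_val] <;>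
    fun_prop

theorem twoIteratedFGM_sub_mul_eq_sum (α₁ α₂ α₃ u v : ℝ) :
    twoIteratedFGM α₁ α₂ α₃ u v - u * v =
      ∑ i, ![α₁, α₂, α₃] i * fgmGenerator i u * fgmGenerator i v := by
  simp only [Fin.sum_univ_three, fgmGenerator, twoIteratedFGM, Matrix.cons_val]
  ring

theorem integral_integral_twoIteratedFGM_sub_mul_mul (α₁ α₂ α₃ : ℝ) {w : ℝ → ℝ}
    (hw : Continuous w) :
    ∫ u in (0:ℝ)..1, ∫ v in (0:ℝ)..1, (twoIteratedFGM α₁ α₂ α₃ u v - u * v) * w v =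
      ∑ i, ![α₁, α₂, α₃] i * (∫ u in (0:ℝ)..1, fgmGenerator i u) *
        ∫ v in (0:ℝ)..1, fgmGenerator i v * w v := by
  simp_rw [twoIteratedFGM_sub_mul_eq_sum, Finset.sum_mul, mul_assoc (_ * fgmGenerator _ _)]
  exact intervalIntegral.integral_integral_sum_mul (μ := volume) (ν := volume) _ _
    (g := fun i v => fgmGenerator i v * w v)
    (fun i _ => (continuous_fgmGenerator i).intervalIntegrable _ _)
    (fun i _ => ((continuous_fgmGenerator i).mul hw).intervalIntegrable _ _)

theorem integrals_fgmGenerator (i : Fin 3) :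
    ∫ t in (0:ℝ)..1, fgmGenerator i t = ![1 / 6, 1 / 12, 1 / 30] i ∧
    ∫ t in (0:ℝ)..1, fgmGenerator i t * (12 * t - 6) = ![0, 1 / 10, 0] i ∧
    ∫ t in (0:ℝ)..1, fgmGenerator i t * (60 * t ^ 2 - 60 * t + 12) = ![0, 0, -1 / 35] i := by
  fin_cases i <;>
    simp only [fgmGenerator, Fin.zero_eta, Fin.mk_one, Fin.reduceFinMk, Matrix.cons_val] <;>
    refine ⟨?_, ?_, ?_⟩ <;>
    ring_nf <;>
    simp (disch := exact (by fun_prop : Continuous _).intervalIntegrable _ _) only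
      [intervalIntegral.integral_add, intervalIntegral.integral_sub,
        intervalIntegral.integral_mul_const, integral_pow, integral_id] <;>
    norm_num

/-- For the two-iterated FGM copula, the first three bivariate copula L-moments are
`δ₁ = 2∫₀¹∫₀¹ (C − uv) du dv = α₁/18 + α₂/72 + α₃/450`,
`δ₂ = ∫₀¹∫₀¹ (C − uv)(12v − 6) dv du = α₂/120`,
`δ₃ = ∫₀¹∫₀¹ (C − uv)(60v² − 60v + 12) dv du = −α₃/1050`. -/
theorem twoIteratedFGM_first_three_copula_Lmoments (α₁ α₂ α₃ : ℝ) :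
    (2 * (∫ u in (0:ℝ)..1, ∫ v in (0:ℝ)..1, (twoIteratedFGM α₁ α₂ α₃ u v - u * v))
        = α₁ / 18 + α₂ / 72 + α₃ / 450) ∧
    ((∫ u in (0:ℝ)..1, ∫ v in (0:ℝ)..1,
          (twoIteratedFGM α₁ α₂ α₃ u v - u * v) * (12 * v - 6))
        = α₂ / 120) ∧
    ((∫ u in (0:ℝ)..1, ∫ v in (0:ℝ)..1,
          (twoIteratedFGM α₁ α₂ α₃ u v - u * v) * (60 * v ^ 2 - 60 * v + 12))
        = -α₃ / 1050) := by
  have δ₁ := integral_integral_twoIteratedFGM_sub_mul_mul α₁ α₂ α₃ (w := fun _ => 1)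
    continuous_const
  simp only [mul_one] at δ₁
  rw [δ₁, integral_integral_twoIteratedFGM_sub_mul_mul α₁ α₂ α₃ (by fun_prop),
    integral_integral_twoIteratedFGM_sub_mul_mul α₁ α₂ α₃ (by fun_prop)]
  simp only [Fin.sum_univ_three, integrals_fgmGenerator, Matrix.cons_val]
  refine ⟨by ring, by ring, by ring⟩
end

section
/- For the one-iterated FGM copula with parameters (α₁,α₂), Spearman's rho equals ρ(α₁,α₂) = 12 ∫₀¹∫₀¹ u v · c_{α₁,α₂}(u,v) du dv − 3 = α₁/3 + α₂/12, where c_{α₁,α₂}(u,v) = 1 + α₁(1−2u)(1−2v) + α₂(2u−3u²)(2v−3v²) is the mixed second partial derivative ∂²C_{α₁,α₂}/∂u∂v. -/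
open MeasureTheory

/-! The weighted density `u v c(u,v)` is a sum of separable terms `w i * φ i u * φ i v` with
`w = (1, α₁, α₂)` and `φ = (u, u(1 - 2u), u(2u - 3u²))`, so the double integral factors as
`∑ w i * (∫₀¹ φ i)²`, and the three moments are `1/2`, `-1/6` and `-1/12`. -/

theorem intervalIntegral_integral_sum_mul {ι : Type*} (s : Finset ι) (f g : ι → ℝ → ℝ)
    {a b c d : ℝ} {μ ν : Measure ℝ}
    (hf : ∀ i ∈ s, IntervalIntegrable (f i) μ a b) (hg : ∀ i ∈ s, IntervalIntegrable (g i) ν c d) :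
    ∫ u in a..b, ∫ v in c..d, ∑ i ∈ s, f i u * g i v ∂ν ∂μ
      = ∑ i ∈ s, (∫ u in a..b, f i u ∂μ) * ∫ v in c..d, g i v ∂ν := by
  have hinner (u : ℝ) :
      ∫ v in c..d, ∑ i ∈ s, f i u * g i v ∂ν = ∑ i ∈ s, f i u * ∫ v in c..d, g i v ∂ν := by
    rw [intervalIntegral.integral_finsetSum fun i hi => (hg i hi).const_mul _]
    simp only [intervalIntegral.integral_const_mul]
  simp only [hinner]
  rw [intervalIntegral.integral_finsetSum fun i hi => (hf i hi).mul_const _]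
  simp only [intervalIntegral.integral_mul_const]

/-- For the one-iterated FGM copula with parameters `(α₁,α₂)` and density
`c(u,v) = 1 + α₁(1−2u)(1−2v) + α₂(2u−3u²)(2v−3v²)`, Spearman's rho equals
`ρ = 12∫₀¹∫₀¹ uv·c(u,v) du dv − 3 = α₁/3 + α₂/12`. -/
theorem iteratedFGM_spearman_rho (α₁ α₂ : ℝ) :
    12 * (∫ u in (0:ℝ)..1, ∫ v in (0:ℝ)..1,
        u * v * (1 + α₁ * (1 - 2*u) * (1 - 2*v)
          + α₂ * (2*u - 3*u^2) * (2*v - 3*v^2))) - 3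
      = α₁ / 3 + α₂ / 12 := by
  let w : Fin 3 → ℝ := ![1, α₁, α₂]
  let φ : Fin 3 → ℝ → ℝ := ![fun u => u, fun u => u - 2*u^2, fun u => 2*u^2 - 3*u^3]
  have hφ (i : Fin 3) : Continuous (φ i) := by
    fin_cases i <;> simp [φ] <;> fun_prop
  have hsep (u v : ℝ) : u * v * (1 + α₁ * (1 - 2*u) * (1 - 2*v)
      + α₂ * (2*u - 3*u^2) * (2*v - 3*v^2)) = ∑ i, w i * φ i u * φ i v := by
    simp only [Fin.sum_univ_three, w, φ, Matrix.cons_val_zero, Matrix.cons_val_one,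
      Matrix.cons_val_two, Matrix.tail_cons, Matrix.head_cons]
    ring
  have hmoment₀ : ∫ u in (0:ℝ)..1, u = 1/2 := by norm_num
  have hmoment₁ : ∫ u in (0:ℝ)..1, (u - 2*u^2) = -1/6 := by
    norm_num [intervalIntegral.integral_sub, intervalIntegral.integral_const_mul]
  have hmoment₂ : ∫ u in (0:ℝ)..1, (2*u^2 - 3*u^3) = -1/12 := by
    norm_num [intervalIntegral.integral_sub, intervalIntegral.integral_const_mul]
  simp only [hsep]
  rw [intervalIntegral_integral_sum_mul _ _ _
    (fun i _ => ((hφ i).const_mul (w i)).intervalIntegrable 0 1)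
    (fun i _ => (hφ i).intervalIntegrable 0 1)]
  simp only [Fin.sum_univ_three, intervalIntegral.integral_const_mul, w, φ, Matrix.cons_val_zero,
    Matrix.cons_val_one, Matrix.cons_val_two, Matrix.tail_cons, Matrix.head_cons,
    hmoment₀, hmoment₁, hmoment₂]
  ring
end

section
/- Over the admissible parameter region R of the one-iterated FGM family, Spearman's rho ρ(α₁,α₂) = α₁/3 + α₂/12 attains its minimum value −1/3, i.e., for every (α₁,α₂) ∈ R one has α₁/3 + α₂/12 ≥ −1/3, with equality if and only if (α₁,α₂) = (−1,0) (which belongs to R). -/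
/-- The admissible parameter region of the one-iterated FGM family. -/
def iteratedFGMRegion : Set (ℝ × ℝ) :=
  {p | |p.1| ≤ 1 ∧ p.1 + p.2 ≥ -1 ∧
    p.2 ≤ (3 - p.1 + Real.sqrt (9 - 6 * p.1 - 3 * p.1 ^ 2)) / 2}

theorem neg_one_zero_mem_iteratedFGMRegion : ((-1 : ℝ), (0 : ℝ)) ∈ iteratedFGMRegion :=
  ⟨by norm_num, by norm_num, by dsimp only; positivity⟩

/-- Over the admissible region of the one-iterated FGM family, Spearman's rho
`ρ(α₁,α₂) = α₁/3 + α₂/12` attains its minimum value `−1/3`, with equality if and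
only if `(α₁,α₂) = (−1,0)`, which belongs to the region. -/
theorem iteratedFGM_spearman_min :
    ((-1 : ℝ), (0 : ℝ)) ∈ iteratedFGMRegion ∧
    ∀ α₁ α₂ : ℝ, (α₁, α₂) ∈ iteratedFGMRegion →
      (-1/3 ≤ α₁ / 3 + α₂ / 12 ∧
        (α₁ / 3 + α₂ / 12 = -1/3 ↔ (α₁ = -1 ∧ α₂ = 0))) := by
  refine ⟨neg_one_zero_mem_iteratedFGMRegion, fun α₁ α₂ ⟨hα₁, hsum, _⟩ => ?_⟩
  have hfirst : 0 ≤ (α₁ + 1) / 4 := by linarith [neg_le_of_abs_le hα₁]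
  have hsecond : 0 ≤ (α₁ + α₂ + 1) / 12 := by linarith
  have hρ : α₁ / 3 + α₂ / 12 = -1/3 + ((α₁ + 1) / 4 + (α₁ + α₂ + 1) / 12) := by ring
  rw [hρ, add_eq_left, add_eq_zero_iff_of_nonneg hfirst hsecond]
  refine ⟨le_add_of_nonneg_right (add_nonneg hfirst hsecond), ?_, ?_⟩
  · rintro ⟨h₁, h₂⟩
    constructor <;> linarith
  · rintro ⟨rfl, rfl⟩
    norm_num
end

section
/- Over the admissible parameter region R of the one-iterated FGM family, Spearman's rho ρ(α₁,α₂) = α₁/3 + α₂/12 attains its maximum value (√13 − 1)/6 at the point (α₁,α₂) = (−1 + 7/√13, 2 − 2/√13) ∈ R; i.e., for every (α₁,α₂) ∈ R one has α₁/3 + α₂/12 ≤ (√13 − 1)/6, with equality at (−1 + 7/√13, 2 − 2/√13). -/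
open Real

lemma mul_add_mul_le_sqrt_mul_sqrt (a b x y : ℝ) :
    a * x + b * y ≤ √(a ^ 2 + b ^ 2) * √(x ^ 2 + y ^ 2) := by
  simpa [Fin.sum_univ_two] using sum_mul_le_sqrt_mul_sqrt Finset.univ ![a, b] ![x, y]

lemma mul_add_mul_sqrt_sub_sq_le (a b : ℝ) {r u : ℝ} (hr : 0 ≤ r) (hu : u ^ 2 ≤ r ^ 2) :
    a * u + b * √(r ^ 2 - u ^ 2) ≤ √(a ^ 2 + b ^ 2) * r := by
  calc a * u + b * √(r ^ 2 - u ^ 2)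
      ≤ √(a ^ 2 + b ^ 2) * √(u ^ 2 + √(r ^ 2 - u ^ 2) ^ 2) :=
        mul_add_mul_le_sqrt_mul_sqrt _ _ _ _
    _ = √(a ^ 2 + b ^ 2) * r := by
        rw [sq_sqrt (by linarith), add_sub_cancel, sqrt_sq hr]

lemma sqrt_iteratedFGM_discriminant (a : ℝ) :
    √(9 - 6 * a - 3 * a ^ 2) = √3 * √(2 ^ 2 - (a + 1) ^ 2) := by
  rw [← sqrt_mul zero_le_three]
  ring_nf

lemma spearman_le_of_mem_iteratedFGMRegion {α₁ α₂ : ℝ} (h : (α₁, α₂) ∈ iteratedFGMRegion) :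
    α₁ / 3 + α₂ / 12 ≤ (√13 - 1) / 6 := by
  obtain ⟨hα₁, -, hα₂⟩ := h
  rw [abs_le] at hα₁
  have hu : (α₁ + 1) ^ 2 ≤ 2 ^ 2 := sq_le_sq' (by linarith) (by linarith)
  have hcs := mul_add_mul_sqrt_sub_sq_le 7 √3 zero_le_two hu
  have hnorm : √(7 ^ 2 + √3 ^ 2) = 2 * √13 := by
    rw [sq_sqrt zero_le_three, show (7 : ℝ) ^ 2 + 3 = 2 ^ 2 * 13 by norm_num,
      sqrt_mul (by positivity), sqrt_sq zero_le_two]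
  rw [hnorm] at hcs
  rw [sqrt_iteratedFGM_discriminant] at hα₂
  dsimp only at hα₂
  set T := √3 * √(2 ^ 2 - (α₁ + 1) ^ 2)
  linarith

lemma maximizer_mem_iteratedFGMRegion :
    (-1 + 7 / √13, 2 - 2 / √13) ∈ iteratedFGMRegion := by
  have hs : 0 < √13 := by positivity
  have hs2 : √13 ^ 2 = 13 := sq_sqrt (by norm_num)
  have h7 : 7 / √13 ≤ 2 := by
    rw [div_le_iff₀ hs]
    nlinarith
  have hdisc : 9 - 6 * (-1 + 7 / √13) - 3 * (-1 + 7 / √13) ^ 2 = (3 / √13) ^ 2 := by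
    field_simp
    linear_combination 12 * hs2
  have h7pos : 0 < 7 / √13 := by positivity
  refine ⟨abs_le.mpr ⟨by linarith, by linarith⟩, ?_, ?_⟩
  · have : 2 / √13 ≤ 7 / √13 := by gcongr; norm_num
    dsimp only
    linarith
  · dsimp only
    rw [hdisc, sqrt_sq (by positivity)]
    exact le_of_eq (by ring)

lemma spearman_at_maximizer :
    (-1 + 7 / √13) / 3 + (2 - 2 / √13) / 12 = (√13 - 1) / 6 := by
  field_simp
  linear_combination -36 * (sq_sqrt (show (0 : ℝ) ≤ 13 by norm_num))

/-- Over the admissible region of the one-iterated FGM family, Spearman's rho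
`ρ(α₁,α₂) = α₁/3 + α₂/12` attains its maximum value `(√13 − 1)/6` at the point
`(α₁,α₂) = (−1 + 7/√13, 2 − 2/√13)`, which belongs to the region. -/
theorem iteratedFGM_spearman_max :
    ((-1 + 7 / Real.sqrt 13, 2 - 2 / Real.sqrt 13) ∈ iteratedFGMRegion) ∧
    (∀ α₁ α₂ : ℝ, (α₁, α₂) ∈ iteratedFGMRegion →
      α₁ / 3 + α₂ / 12 ≤ (Real.sqrt 13 - 1) / 6) ∧
    ((-1 + 7 / Real.sqrt 13) / 3 + (2 - 2 / Real.sqrt 13) / 12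
      = (Real.sqrt 13 - 1) / 6) :=
  ⟨maximizer_mem_iteratedFGMRegion, fun _ _ ↦ spearman_le_of_mem_iteratedFGMRegion,
    spearman_at_maximizer⟩
end

section
/- Let Y be an integrable real random variable with continuous distribution function F_Y and quantile function F_Y^{−1}(u) = inf{x : F_Y(x) ≥ u}. Then for every integer k ≥ 2, the k-th L-moment admits the covariance representation ∫₀¹ F_Y^{−1}(u) P_{k−1}(u) du = Cov(Y, P_{k−1}(F_Y(Y))), where P_{k−1} is the (k−1)-th shifted Legendre polynomial. -/
/-
Pushing Lebesgue measure on `(0, 1)` forward by the quantile function gives the law of `Y`, and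
continuity of `F` gives `F (F⁻¹ u) = u`. Hence `E[g(Y, F Y)] = ∫₀¹ g(F⁻¹ u, u) du` for every
measurable `g`: with `g(x, u) = x P(u)` this turns `E[Y P(F Y)]` into the L-moment, and with
`g(x, u) = P(u)` it turns `E[P(F Y)]` into `∫₀¹ P = 0`, which by Rodrigues' formula is a boundary
term of a derivative of `uᵏ (1 - u)ᵏ` of order `k - 1`.
-/

open MeasureTheory Set

open ProbabilityTheory Function

namespace Polynomial

open Nat

lemma isRoot_iterate_derivative_of_pow_dvd {R : Type*} [CommRing R] {p : R[X]} {a : R}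
    {m n : ℕ} (h : (X - C a) ^ n ∣ p) (hm : m < n) : (derivative^[m] p).IsRoot a :=
  dvd_iff_isRoot.mp <| (dvd_pow_self _ (Nat.sub_ne_zero_of_lt hm)).trans
    (pow_sub_dvd_iterate_derivative_of_pow_dvd m h)

lemma aeval_intCast_eq_zero_of_isRoot {A : Type*} [CommRing A] {p : ℤ[X]} {n : ℤ}
    (h : p.IsRoot n) : aeval (n : A) p = 0 := by
  simpa [h.eq_zero] using aeval_algebraMap_apply_eq_algebraMap_eval (A := A) n p

/-- Rodrigues' formula reduces the integral to boundary values of a derivative of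
`Xⁿ (1 - X)ⁿ` of order `n - 1`, which vanish at `0` and `1`. -/
lemma integral_aeval_shiftedLegendre {n : ℕ} (hn : n ≠ 0) :
    ∫ u in (0 : ℝ)..1, aeval u (shiftedLegendre n) = 0 := by
  obtain ⟨m, rfl⟩ := Nat.exists_eq_succ_of_ne_zero hn
  set R : ℤ[X] := X ^ (m + 1) * (1 - X) ^ (m + 1)
  have hroot0 : (derivative^[m] R).IsRoot 0 := by
    refine isRoot_iterate_derivative_of_pow_dvd (a := 0) ?_ m.lt_succ_self
    rw [map_zero, sub_zero]
    exact dvd_mul_right _ _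
  have hroot1 : (derivative^[m] R).IsRoot 1 := by
    refine isRoot_iterate_derivative_of_pow_dvd (a := 1) ?_ m.lt_succ_self
    have h : X - C 1 ∣ (1 - X : ℤ[X]) := by
      rw [map_one, ← neg_sub X 1]
      exact dvd_neg.mpr (dvd_refl _)
    exact (pow_dvd_pow_of_dvd h _).mul_left _
  have hrodrigues : ∀ u : ℝ, ((m + 1)! : ℝ) * aeval u (shiftedLegendre (m + 1)) =
      aeval u (derivative (derivative^[m] R)) := fun u => by
    rw [← iterate_succ_apply' derivative, ← factorial_mul_shiftedLegendre_eq, map_mul,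
      map_natCast]
  have hFTC : ∫ u in (0 : ℝ)..1, aeval u (derivative (derivative^[m] R)) =
      aeval (1 : ℝ) (derivative^[m] R) - aeval (0 : ℝ) (derivative^[m] R) :=
    intervalIntegral.integral_eq_sub_of_hasDerivAt (fun x _ => Polynomial.hasDerivAt_aeval _ x)
      ((Polynomial.continuous_aeval _).intervalIntegrable _ _)
  have h1 : aeval (1 : ℝ) (derivative^[m] R) = 0 := by
    exact_mod_cast aeval_intCast_eq_zero_of_isRoot (A := ℝ) (n := 1) (by exact_mod_cast hroot1)
  have h0 : aeval (0 : ℝ) (derivative^[m] R) = 0 := by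
    exact_mod_cast aeval_intCast_eq_zero_of_isRoot (A := ℝ) (n := 0) (by exact_mod_cast hroot0)
  have : ((m + 1)! : ℝ) * ∫ u in (0 : ℝ)..1, aeval u (shiftedLegendre (m + 1)) = 0 := by
    rw [← intervalIntegral.integral_const_mul]
    simp_rw [hrodrigues]
    rw [hFTC, h1, h0, sub_zero]
  simpa [Nat.factorial_ne_zero] using this

end Polynomial

lemma shiftedLegendre_eq_neg_one_pow_mul_aeval (k : ℕ) (u : ℝ) :
    shiftedLegendre k u = (-1) ^ k * Polynomial.aeval u (Polynomial.shiftedLegendre k) := by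
  simp only [shiftedLegendre, Polynomial.shiftedLegendre, map_sum, map_mul, Polynomial.aeval_C,
    Polynomial.aeval_X_pow, Finset.mul_sum]
  refine Finset.sum_congr rfl fun l hl => ?_
  have hl : l ≤ k := Nat.lt_succ_iff.mp (Finset.mem_range.mp hl)
  push_cast
  rw [Nat.cast_choose ℝ hl, Nat.cast_choose ℝ (Nat.le_add_right k l), Nat.add_sub_cancel_left,
    pow_add]
  field_simp

@[fun_prop]
lemma continuous_shiftedLegendre (k : ℕ) : Continuous (shiftedLegendre k) := by
  simp_rw [funext (shiftedLegendre_eq_neg_one_pow_mul_aeval k)]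
  exact continuous_const.mul (Polynomial.continuous_aeval _)

lemma integral_shiftedLegendre {k : ℕ} (hk : k ≠ 0) :
    ∫ u in (0 : ℝ)..1, shiftedLegendre k u = 0 := by
  simp_rw [shiftedLegendre_eq_neg_one_pow_mul_aeval, intervalIntegral.integral_const_mul,
    Polynomial.integral_aeval_shiftedLegendre hk, mul_zero]

namespace ProbabilityTheory

/-- Meaningful only for `u ∈ (0, 1)`: otherwise the set may be empty or unbounded below, and then
`sInf` returns the junk value `0`. -/
noncomputable def quantile (μ : Measure ℝ) (u : ℝ) : ℝ := sInf {x | u ≤ cdf μ x}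

variable (μ : Measure ℝ) {u : ℝ}

lemma bddBelow_setOf_le_cdf (hu : 0 < u) : BddBelow {x | u ≤ cdf μ x} := by
  obtain ⟨a, ha⟩ := ((tendsto_cdf_atBot μ).eventually (eventually_lt_nhds hu)).exists
  exact ⟨a, fun x hx => le_of_not_ge fun hxa => (ha.trans_le hx).not_ge (monotone_cdf μ hxa)⟩

lemma nonempty_setOf_le_cdf (hu : u < 1) : {x | u ≤ cdf μ x}.Nonempty :=
  ((tendsto_cdf_atTop μ).eventually (eventually_ge_nhds hu)).exists

/-- Right continuity of `cdf μ` is what makes the infimum attained. -/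
lemma le_cdf_quantile (hu : u ∈ Ioo 0 1) : u ≤ cdf μ (quantile μ u) := by
  refine ge_of_tendsto (((cdf μ).right_continuous _).mono Ioi_subset_Ici_self) ?_
  refine eventually_nhdsWithin_of_forall fun y hy => ?_
  obtain ⟨z, hz, hzy⟩ := exists_lt_of_csInf_lt (nonempty_setOf_le_cdf μ hu.2) hy
  exact hz.trans (monotone_cdf μ hzy.le)

lemma quantile_le_iff (hu : u ∈ Ioo 0 1) {x : ℝ} : quantile μ u ≤ x ↔ u ≤ cdf μ x :=
  ⟨fun h => (le_cdf_quantile μ hu).trans (monotone_cdf μ h),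
    fun h => csInf_le (bddBelow_setOf_le_cdf μ hu.1) h⟩

lemma monotoneOn_quantile : MonotoneOn (quantile μ) (Ioo 0 1) := fun _ hu _ hv huv =>
  (quantile_le_iff μ hu).2 (huv.trans ((quantile_le_iff μ hv).1 le_rfl))

lemma cdf_quantile (hc : Continuous (cdf μ)) (hu : u ∈ Ioo 0 1) : cdf μ (quantile μ u) = u := by
  refine le_antisymm ?_ (le_cdf_quantile μ hu)
  refine le_of_tendsto (hc.continuousWithinAt (s := Iio (quantile μ u))) ?_
  exact eventually_nhdsWithin_of_forall fun y (hy : y < quantile μ u) =>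
    (not_le.mp fun h => hy.not_ge ((quantile_le_iff μ hu).2 h)).le

lemma measurable_comp_cdf {g : ℝ → ℝ → ℝ} (hg : Measurable (uncurry g)) :
    Measurable fun x => g x (cdf μ x) :=
  hg.comp (measurable_id.prodMk (monotone_cdf μ).measurable)

variable [IsProbabilityMeasure μ]

lemma map_quantile_volume_restrict_Ioo :
    (volume.restrict (Ioo 0 1)).map (quantile μ) = μ := by
  refine Measure.ext_of_Iic _ _ fun x => ?_
  rw [Measure.map_apply_of_aemeasurable
      (aemeasurable_restrict_of_monotoneOn measurableSet_Ioo (monotoneOn_quantile μ))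
      measurableSet_Iic, Measure.restrict_apply' measurableSet_Ioo, ← ofReal_cdf]
  have hset : quantile μ ⁻¹' Iic x ∩ Ioo 0 1 = Iic (cdf μ x) ∩ Ioo 0 1 := by
    ext v
    exact and_congr_left fun hv => quantile_le_iff μ hv
  rw [hset]
  refine le_antisymm ?_ ?_
  · calc volume (Iic (cdf μ x) ∩ Ioo 0 1) ≤ volume (Ioc 0 (cdf μ x)) :=
          measure_mono fun v hv => by exact ⟨hv.2.1, hv.1⟩
      _ = _ := by rw [Real.volume_Ioc, sub_zero]
  · calc ENNReal.ofReal (cdf μ x) = volume (Ioo 0 (cdf μ x)) := by rw [Real.volume_Ioo, sub_zero]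
      _ ≤ _ := measure_mono fun v hv => by exact ⟨hv.2.le, hv.1, hv.2.trans_le (cdf_le_one μ x)⟩

lemma integral_comp_cdf_eq_intervalIntegral_quantile (hc : Continuous (cdf μ))
    {g : ℝ → ℝ → ℝ} (hg : Measurable (uncurry g)) :
    ∫ x, g x (cdf μ x) ∂μ = ∫ u in (0 : ℝ)..1, g (quantile μ u) u := by
  have hq :=
    aemeasurable_restrict_of_monotoneOn (μ := volume) measurableSet_Ioo (monotoneOn_quantile μ)
  calc ∫ x, g x (cdf μ x) ∂μ
      = ∫ x, g x (cdf μ x) ∂(volume.restrict (Ioo 0 1)).map (quantile μ) := by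
        rw [map_quantile_volume_restrict_Ioo]
    _ = ∫ u in Ioo 0 1, g (quantile μ u) (cdf μ (quantile μ u)) :=
        integral_map hq (measurable_comp_cdf μ hg).aestronglyMeasurable
    _ = ∫ u in Ioo 0 1, g (quantile μ u) u :=
        setIntegral_congr_fun measurableSet_Ioo fun u hu => by rw [cdf_quantile μ hc hu]
    _ = ∫ u in (0 : ℝ)..1, g (quantile μ u) u := by
        rw [intervalIntegral.integral_of_le zero_le_one, integral_Ioc_eq_integral_Ioo]

end ProbabilityTheory

/-- **Covariance representation of univariate L-moments.** If `Y` is integrable with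
continuous distribution function `F_Y` and quantile function
`F_Y⁻¹(u) = inf{x : F_Y(x) ≥ u}`, then for every `k ≥ 2`,
`∫₀¹ F_Y⁻¹(u) P_{k−1}(u) du = Cov(Y, P_{k−1}(F_Y(Y)))`. -/
theorem univariate_Lmoment_cov_representation
    {Ω : Type*} [MeasurableSpace Ω] (P : Measure Ω) [IsProbabilityMeasure P]
    (Y : Ω → ℝ) (hY : Integrable Y P)
    (F : ℝ → ℝ) (hF : ∀ x, F x = (P {ω | Y ω ≤ x}).toReal)
    (hFc : Continuous F)
    (Q : ℝ → ℝ) (hQ : ∀ u, Q u = sInf {x | u ≤ F x})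
    (k : ℕ) (hk : 2 ≤ k) :
    (∫ u in (0:ℝ)..1, Q u * shiftedLegendre (k - 1) u)
      = (∫ ω, Y ω * shiftedLegendre (k - 1) (F (Y ω)) ∂P)
        - (∫ ω, Y ω ∂P) * (∫ ω, shiftedLegendre (k - 1) (F (Y ω)) ∂P) := by
  have hYm := hY.aemeasurable
  set μ := P.map Y
  have : IsProbabilityMeasure μ := Measure.isProbabilityMeasure_map hYm
  have hFμ : F = cdf μ := funext fun x => by
    rw [hF, cdf_eq_real, measureReal_def, Measure.map_apply_of_aemeasurable hYm measurableSet_Iic]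
    rfl
  have hQμ : Q = quantile μ := funext fun u => by rw [hQ, hFμ, quantile]
  subst hFμ hQμ
  have hlaw : ∀ g : ℝ → ℝ → ℝ, Measurable (uncurry g) →
      ∫ ω, g (Y ω) (cdf μ (Y ω)) ∂P = ∫ u in (0 : ℝ)..1, g (quantile μ u) u := fun g hg => by
    rw [← integral_comp_cdf_eq_intervalIntegral_quantile μ hFc hg,
      integral_map hYm (measurable_comp_cdf μ hg).aestronglyMeasurable]
  rw [hlaw (fun x u => x * shiftedLegendre (k - 1) u) (by fun_prop),
    hlaw (fun _ u => shiftedLegendre (k - 1) u) (by fun_prop),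
    integral_shiftedLegendre (by omega), mul_zero, sub_zero]
end
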